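/- Let 𝒫_t(Z,Z') = exp(−(π/2)⟨(−J₀J_t)(Z−Z'),(Z−Z')⟩ − π i Ω(Z,Z')) for Z,Z' ∈ ℝ^{2n}. Then the composed kernel (𝒫_t 𝒫_0)(Z,Z') = ∫_{ℝ^{2n}} 𝒫_t(Z,W) 𝒫_0(W,Z') dW equals det(A_t^0)^{1/2} · exp(−π[⟨Π_0^t(Z−Z'),(Z−Z')⟩ + i Ω(Z,Z')]), where A_t^0 = (½(Id+(−J₀J_t)))^{-1} and Π_0^t is the projection onto V_0^{(1,0)} with kernel V_t^{(0,1)}. -/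

import Mathlib

/-!
Both model kernels are covariant under the magnetic translations `Z ↦ Z + a`: shifting both
arguments multiplies `𝒫_J(Z, W)` by `exp(-πi Ω(Z - W, a))`. The closed formula has the same
covariance, so after the substitution `W ↦ W + Z'` it suffices to treat `Z' = 0`. There the
integrand is `exp(-(π/2)⟨BZ, Z⟩)` times a Gaussian in `W` with real quadratic part
`π⟨½(1 + B)W, W⟩`, where `B = -J₀J_t` is positive definite by compatibility, and complex linear
part `π X Z`, `X = B - iJ₀`. The Gaussian integral produces `det(A_t^0)^{1/2}` and the exponent
`(π/4)⟨A_t^0 X Z, X Z⟩`, and the total exponent is `-π⟨Π_0^t Z, Z⟩` because `A_0^t = B A_t^0`,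
hence `A_t^0 X = 2Π_0^t`, `(1 + B)Π_0^t = X` and `J₀Π_0^t = iΠ_0^t` (the range of `Π_0^t` is
`V_0^{(1,0)}`).
-/

open Matrix MeasureTheory

noncomputable section

/-- Standard complex structure on ℝ^{2n}: J₀ e_{2k} = e_{2k+1}, J₀ e_{2k+1} = -e_{2k}. -/
def J0 (n : ℕ) : Matrix (Fin (2*n)) (Fin (2*n)) ℝ :=
  Matrix.of fun i j =>
    if (i : ℕ) = (j : ℕ) + 1 ∧ (j : ℕ) % 2 = 0 then 1
    else if (j : ℕ) = (i : ℕ) + 1 ∧ (i : ℕ) % 2 = 0 then -1 else 0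

/-- Standard symplectic form Ω(u,v) = ⟨J₀ u, v⟩. -/
def Omega (n : ℕ) (u v : Fin (2*n) → ℝ) : ℝ := (J0 n *ᵥ u) ⬝ᵥ v

/-- A complex structure J compatible with Ω: J² = -Id, Ω is J-invariant,
and ⟨·,·⟩_J := Ω(·, J·) is positive definite. -/
def Compatible (n : ℕ) (J : Matrix (Fin (2*n)) (Fin (2*n)) ℝ) : Prop :=
  J * J = -1 ∧ (∀ u v, Omega n (J *ᵥ u) (J *ᵥ v) = Omega n u v) ∧
    ∀ v : Fin (2*n) → ℝ, v ≠ 0 → 0 < Omega n v (J *ᵥ v)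

/-- Complexification of a real matrix. -/
def mc {m : ℕ} (M : Matrix (Fin m) (Fin m) ℝ) : Matrix (Fin m) (Fin m) ℂ :=
  M.map (fun x => (x : ℂ))

/-- Complexification of a real vector. -/
def vc {m : ℕ} (v : Fin m → ℝ) : Fin m → ℂ := fun i => (v i : ℂ)

/-- Projection P^{(1,0)} = ½(Id - iK) onto the +i eigenspace of K. -/
def P10 {n : ℕ} (K : Matrix (Fin (2*n)) (Fin (2*n)) ℝ) : Matrix (Fin (2*n)) (Fin (2*n)) ℂ :=
  (1/2 : ℂ) • (1 - Complex.I • mc K)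

/-- Projection P^{(0,1)} = ½(Id + iK) onto the -i eigenspace of K. -/
def P01 {n : ℕ} (K : Matrix (Fin (2*n)) (Fin (2*n)) ℝ) : Matrix (Fin (2*n)) (Fin (2*n)) ℂ :=
  (1/2 : ℂ) • (1 + Complex.I • mc K)

/-- `Amat n K J = (½(Id + (-K)·J))⁻¹`; so `Amat n (J0 n) J` is A_t^0 and
`Amat n J (J0 n)` is A_0^t. -/
def Amat (n : ℕ) (K J : Matrix (Fin (2*n)) (Fin (2*n)) ℝ) : Matrix (Fin (2*n)) (Fin (2*n)) ℝ :=
  ((1/2 : ℝ) • (1 + (-K) * J))⁻¹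

/-- Π_t^0 = A_t^0 · P₀^{(1,0)}, the projection onto V_t^{(1,0)} with kernel V₀^{(0,1)}. -/
def PiT0 (n : ℕ) (J : Matrix (Fin (2*n)) (Fin (2*n)) ℝ) : Matrix (Fin (2*n)) (Fin (2*n)) ℂ :=
  mc (Amat n (J0 n) J) * P10 (J0 n)

/-- Π_0^t = A_0^t · P_t^{(1,0)}, the projection onto V₀^{(1,0)} with kernel V_t^{(0,1)}. -/
def Pi0T (n : ℕ) (J : Matrix (Fin (2*n)) (Fin (2*n)) ℝ) : Matrix (Fin (2*n)) (Fin (2*n)) ℂ :=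
  mc (Amat n J (J0 n)) * P10 J

/-- Model Bergman kernel 𝒫_J(Z,Z') = exp(-(π/2)⟨(-J₀J)(Z-Z'),Z-Z'⟩ - πiΩ(Z,Z')). -/
def Pker (n : ℕ) (J : Matrix (Fin (2*n)) (Fin (2*n)) ℝ) (Z Z' : Fin (2*n) → ℝ) : ℂ :=
  Complex.exp (-(Real.pi : ℂ)/2 * Complex.ofReal ((((-(J0 n)) * J) *ᵥ (Z - Z')) ⬝ᵥ (Z - Z'))
    - (Real.pi : ℂ) * Complex.I * Complex.ofReal (Omega n Z Z'))

/-- Closed formula for the composed kernel (𝒫_t𝒫_0)(Z,Z'). -/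
def PtP0form (n : ℕ) (J : Matrix (Fin (2*n)) (Fin (2*n)) ℝ) (Z Z' : Fin (2*n) → ℝ) : ℂ :=
  Complex.ofReal (Real.sqrt (Amat n (J0 n) J).det) *
    Complex.exp (-(Real.pi : ℂ) *
      ((Pi0T n J *ᵥ (vc Z - vc Z')) ⬝ᵥ (vc Z - vc Z')
        + Complex.I * Complex.ofReal (Omega n Z Z')))

lemma mc_mul {m : ℕ} (M N : Matrix (Fin m) (Fin m) ℝ) : mc (M * N) = mc M * mc N :=
  Matrix.map_mul (f := Complex.ofRealHom)

lemma mc_one {m : ℕ} : mc (1 : Matrix (Fin m) (Fin m) ℝ) = 1 :=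
  Matrix.map_one _ Complex.ofReal_zero Complex.ofReal_one

lemma mc_add {m : ℕ} (M N : Matrix (Fin m) (Fin m) ℝ) : mc (M + N) = mc M + mc N :=
  Matrix.map_add _ Complex.ofReal_add M N

lemma mc_neg {m : ℕ} (M : Matrix (Fin m) (Fin m) ℝ) : mc (-M) = -mc M :=
  Matrix.map_neg _ Complex.ofReal_neg M

lemma mc_smul {m : ℕ} (c : ℝ) (M : Matrix (Fin m) (Fin m) ℝ) : mc (c • M) = (c : ℂ) • mc M :=
  Matrix.map_smul' _ c M Complex.ofReal_mul

lemma mc_transpose {m : ℕ} (M : Matrix (Fin m) (Fin m) ℝ) : mc Mᵀ = (mc M)ᵀ := rfl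

lemma vc_zero {m : ℕ} : vc (0 : Fin m → ℝ) = 0 := funext fun _ => Complex.ofReal_zero

lemma vc_mulVec {m : ℕ} (M : Matrix (Fin m) (Fin m) ℝ) (v : Fin m → ℝ) :
    vc (M *ᵥ v) = mc M *ᵥ vc v :=
  funext fun i => RingHom.map_mulVec Complex.ofRealHom M v i

lemma ofReal_dotProduct {m : ℕ} (u v : Fin m → ℝ) : ((u ⬝ᵥ v : ℝ) : ℂ) = vc u ⬝ᵥ vc v :=
  RingHom.map_dotProduct Complex.ofRealHom u v

lemma mulVec_dotProduct {ι R : Type*} [Fintype ι] [CommSemiring R] (M : Matrix ι ι R)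
    (u v : ι → R) : (M *ᵥ u) ⬝ᵥ v = u ⬝ᵥ (Mᵀ *ᵥ v) := by
  rw [Matrix.dotProduct_transpose_mulVec, dotProduct_comm]

lemma inv_mul_eq_mul_inv_of_mul_eq {ι R : Type*} [Fintype ι] [DecidableEq ι] [CommRing R]
    {M X Y : Matrix ι ι R} (hM : IsUnit M.det) (h : M * X = Y * M) : M⁻¹ * Y = X * M⁻¹ :=
  calc M⁻¹ * Y = M⁻¹ * (Y * M) * M⁻¹ := by
        rw [← mul_assoc, Matrix.mul_nonsing_inv_cancel_right _ _ hM]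
    _ = X * M⁻¹ := by rw [← h, ← mul_assoc, Matrix.nonsing_inv_mul _ hM, one_mul]

theorem integral_comp_mulVec {ι E : Type*} [Fintype ι] [DecidableEq ι] [NormedAddCommGroup E]
    [NormedSpace ℝ E] (S : Matrix ι ι ℝ) (hS : S.det ≠ 0) (g : (ι → ℝ) → E) :
    ∫ x, g (S *ᵥ x) = |S.det|⁻¹ • ∫ y, g y := by
  have : Invertible S := S.invertibleOfIsUnitDet hS.isUnit
  have hemb : MeasurableEmbedding (Matrix.toLin' S) :=
    (S.toLinearEquiv' this).toContinuousLinearEquiv.toHomeomorph.measurableEmbedding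
  rw [← abs_inv, ← ENNReal.toReal_ofReal (abs_nonneg _), ← integral_smul_measure,
    ← Real.map_matrix_volume_pi_eq_smul_volume_pi hS, hemb.integral_map]
  rfl

theorem integral_cexp_neg_pi_dotProduct_self_add {m : ℕ} (ℓ : Fin m → ℂ) :
    ∫ u : Fin m → ℝ, Complex.exp (-(Real.pi : ℂ) * ((u ⬝ᵥ u : ℝ) : ℂ) + ℓ ⬝ᵥ vc u)
      = Complex.exp (ℓ ⬝ᵥ ℓ / (4 * (Real.pi : ℂ))) := by
  have hπ : (Real.pi : ℂ) ≠ 0 := Complex.ofReal_ne_zero.mpr Real.pi_ne_zero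
  have h := GaussianFourier.integral_cexp_neg_mul_sum_add (b := (Real.pi : ℂ))
    (by simp [Real.pi_pos]) ℓ
  simp only [div_self hπ, Complex.one_cpow, one_mul] at h
  convert h using 3 with u
  · simp [dotProduct, vc, sq]
  · simp [dotProduct, sq]

open scoped MatrixOrder in
theorem integral_cexp_neg_pi_quadratic_add {m : ℕ} {M : Matrix (Fin m) (Fin m) ℝ}
    (hM : M.PosDef) (L : Fin m → ℂ) :
    ∫ W : Fin m → ℝ, Complex.exp (-(Real.pi : ℂ) * ((M *ᵥ W) ⬝ᵥ W : ℝ) + L ⬝ᵥ vc W)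
      = ((√M.det : ℝ) : ℂ)⁻¹ * Complex.exp ((mc M⁻¹ *ᵥ L) ⬝ᵥ L / (4 * (Real.pi : ℂ))) := by
  obtain ⟨S, rfl⟩ := CStarAlgebra.nonneg_iff_eq_star_mul_self.mp hM.posSemidef.nonneg
  have hSt : star S = Sᵀ := by
    rw [Matrix.star_eq_conjTranspose, Matrix.conjTranspose_eq_transpose_of_trivial]
  have hdet : (star S * S).det = S.det ^ 2 := by
    rw [hSt, Matrix.det_mul, Matrix.det_transpose, sq]
  have hS : S.det ≠ 0 := fun h => hM.det_pos.ne' (by rw [hdet, h]; ring)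
  set ℓ := mc (S⁻¹)ᵀ *ᵥ L
  have hquad (W : Fin m → ℝ) : ((star S * S) *ᵥ W) ⬝ᵥ W = (S *ᵥ W) ⬝ᵥ (S *ᵥ W) := by
    rw [← Matrix.mulVec_mulVec, mulVec_dotProduct, hSt, Matrix.transpose_transpose]
  have hlin (W : Fin m → ℝ) : L ⬝ᵥ vc W = ℓ ⬝ᵥ vc (S *ᵥ W) := by
    rw [vc_mulVec, dotProduct_comm ℓ, mulVec_dotProduct, ← mc_transpose, Matrix.mulVec_mulVec,
      ← mc_mul, ← Matrix.transpose_mul, Matrix.nonsing_inv_mul _ hS.isUnit, Matrix.transpose_one,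
      mc_one, Matrix.one_mulVec, dotProduct_comm]
  simp_rw [hquad, hlin]
  rw [integral_comp_mulVec S hS
      (fun u => Complex.exp (-(Real.pi : ℂ) * ((u ⬝ᵥ u : ℝ) : ℂ) + ℓ ⬝ᵥ vc u)),
    integral_cexp_neg_pi_dotProduct_self_add, hdet, Real.sqrt_sq_eq_abs, Complex.real_smul,
    Complex.ofReal_inv]
  congr 3
  rw [mulVec_dotProduct, Matrix.mulVec_mulVec, ← mc_transpose, ← mc_mul,
    Matrix.transpose_transpose, hSt, Matrix.mul_inv_rev, Matrix.transpose_nonsing_inv,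
    dotProduct_comm]

lemma J0_mul_self (n : ℕ) : J0 n * J0 n = -1 := by
  ext i j
  obtain ⟨p, hp⟩ : ∃ p : Fin (2 * n),
      ((i : ℕ) % 2 = 0 ∧ (p : ℕ) = i + 1) ∨ ((i : ℕ) % 2 = 1 ∧ (p : ℕ) = i - 1) := by
    have := i.isLt
    rcases Nat.mod_two_eq_zero_or_one i with h | h
    · exact ⟨⟨i + 1, by omega⟩, by simp [h]⟩
    · exact ⟨⟨i - 1, by omega⟩, by simp [h]⟩
  rw [Matrix.mul_apply, Finset.sum_eq_single p]
  · simp only [J0, Matrix.of_apply, Matrix.neg_apply, Matrix.one_apply, Fin.ext_iff]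
    split_ifs <;> first | omega | norm_num
  · intro k _ hk
    have hkp : (k : ℕ) ≠ p := fun h => hk (Fin.ext h)
    simp only [J0, Matrix.of_apply]
    split_ifs <;> first | omega | simp
  · simp

lemma J0_transpose (n : ℕ) : (J0 n)ᵀ = -J0 n := by
  ext i j
  simp only [Matrix.transpose_apply, Matrix.neg_apply, J0, Matrix.of_apply]
  split_ifs <;> first | omega | norm_num

lemma Omega_swap (n : ℕ) (u v : Fin (2*n) → ℝ) : Omega n u v = -Omega n v u := by
  rw [Omega, Omega, mulVec_dotProduct, J0_transpose, Matrix.neg_mulVec, dotProduct_neg,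
    dotProduct_comm]

lemma Omega_self (n : ℕ) (u : Fin (2*n) → ℝ) : Omega n u u = 0 := by
  linarith [Omega_swap n u u]

lemma Omega_sub_left (n : ℕ) (u v w : Fin (2*n) → ℝ) :
    Omega n (u - v) w = Omega n u w - Omega n v w := by
  simp only [Omega, Matrix.mulVec_sub, sub_dotProduct]

lemma Omega_add_add (n : ℕ) (Z W a : Fin (2*n) → ℝ) :
    Omega n (Z + a) (W + a) = Omega n Z W + Omega n (Z - W) a := by
  have hswap := Omega_swap n a W
  have hself := Omega_self n a
  simp only [Omega, Matrix.mulVec_add, Matrix.mulVec_sub, add_dotProduct, dotProduct_add,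
    sub_dotProduct] at *
  linarith

section Compatible

variable {n : ℕ} {J : Matrix (Fin (2*n)) (Fin (2*n)) ℝ}

lemma Compatible.transpose_mul_J0_mul (hJ : Compatible n J) : Jᵀ * J0 n * J = J0 n := by
  refine Matrix.ext_iff_mulVec.mpr fun u => dotProduct_eq _ _ fun v => ?_
  simp only [← Matrix.mulVec_mulVec]
  rw [mulVec_dotProduct, Matrix.transpose_transpose]
  exact hJ.2.1 u v

lemma Compatible.transpose_neg_J0_mul (hJ : Compatible n J) : (-J0 n * J)ᵀ = -J0 n * J := by
  have hJK : Jᵀ * J0 n = -J0 n * J :=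
    calc Jᵀ * J0 n = Jᵀ * J0 n * J * (-J) := by rw [mul_neg, mul_assoc _ J J, hJ.1]; simp
      _ = -J0 n * J := by rw [hJ.transpose_mul_J0_mul, mul_neg, neg_mul]
  rw [Matrix.transpose_mul, Matrix.transpose_neg, J0_transpose, neg_neg, hJK]

lemma Compatible.posDef_neg_J0_mul (hJ : Compatible n J) : (-J0 n * J).PosDef := by
  refine Matrix.PosDef.of_dotProduct_mulVec_pos ?_ fun v hv => ?_
  · rw [Matrix.IsHermitian, Matrix.conjTranspose_eq_transpose_of_trivial,
      hJ.transpose_neg_J0_mul]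
  · have h := hJ.2.2 v hv
    rwa [Omega, mulVec_dotProduct, J0_transpose, Matrix.mulVec_mulVec] at h

lemma Compatible.posDef_half_one_add_neg_J0_mul (hJ : Compatible n J) :
    ((1/2 : ℝ) • (1 + (-J0 n) * J)).PosDef :=
  (Matrix.PosDef.one.add hJ.posDef_neg_J0_mul).smul (by norm_num)

lemma Compatible.isUnit_det_half_one_add_neg_J0_mul (hJ : Compatible n J) :
    IsUnit ((1/2 : ℝ) • (1 + (-J0 n) * J)).det :=
  hJ.posDef_half_one_add_neg_J0_mul.det_pos.ne'.isUnit

end Compatible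

section Amat

variable {n : ℕ} {K J : Matrix (Fin (2*n)) (Fin (2*n)) ℝ}

lemma half_one_add_neg_mul_mul_comm :
    ((1/2 : ℝ) • (1 + (-K) * J)) * ((-K) * J) = ((-K) * J) * ((1/2 : ℝ) • (1 + (-K) * J)) := by
  rw [Matrix.smul_mul, Matrix.mul_smul, add_mul, mul_add, one_mul, mul_one]

lemma mul_half_one_add_neg_mul (hK : K * K = -1) (hJ : J * J = -1) :
    K * ((1/2 : ℝ) • (1 + (-K) * J)) = ((1/2 : ℝ) • (1 + (-K) * J)) * J := by
  have hKKJ : K * (K * J) = -J := by rw [← mul_assoc, hK, neg_one_mul]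
  simp only [Matrix.smul_mul, Matrix.mul_smul, mul_add, add_mul, mul_one, one_mul, neg_mul,
    mul_neg, mul_assoc, hKKJ, hJ, neg_neg, add_comm]

lemma half_one_add_neg_mul_swap_mul (hK : K * K = -1) (hJ : J * J = -1) :
    ((1/2 : ℝ) • (1 + (-J) * K)) * ((-K) * J) = (1/2 : ℝ) • (1 + (-K) * J) := by
  have hJKKJ : J * (K * (K * J)) = 1 := by
    rw [← mul_assoc K, hK, neg_one_mul, mul_neg, hJ, neg_neg]
  simp only [Matrix.smul_mul, add_mul, one_mul, neg_mul, mul_neg, mul_assoc, hJKKJ]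
  module

lemma one_add_neg_mul_mul_Amat (h : IsUnit ((1/2 : ℝ) • (1 + (-K) * J)).det) :
    (1 + (-K) * J) * Amat n K J = (2 : ℝ) • 1 :=
  calc (1 + (-K) * J) * Amat n K J
        = (2 : ℝ) • (((1/2 : ℝ) • (1 + (-K) * J)) * Amat n K J) := by
          rw [Matrix.smul_mul, smul_smul]; norm_num
    _ = (2 : ℝ) • 1 := by rw [Amat, Matrix.mul_nonsing_inv _ h]

lemma Amat_mul_comm (h : IsUnit ((1/2 : ℝ) • (1 + (-K) * J)).det) :
    Amat n K J * ((-K) * J) = ((-K) * J) * Amat n K J :=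
  inv_mul_eq_mul_inv_of_mul_eq h half_one_add_neg_mul_mul_comm

lemma Amat_mul_eq_mul_Amat (hK : K * K = -1) (hJ : J * J = -1)
    (h : IsUnit ((1/2 : ℝ) • (1 + (-K) * J)).det) : Amat n K J * K = J * Amat n K J :=
  inv_mul_eq_mul_inv_of_mul_eq h (mul_half_one_add_neg_mul hK hJ).symm

lemma half_one_add_neg_mul_swap_mul_Amat (hK : K * K = -1) (hJ : J * J = -1)
    (h : IsUnit ((1/2 : ℝ) • (1 + (-K) * J)).det) :
    ((1/2 : ℝ) • (1 + (-J) * K)) * ((-K) * J * Amat n K J) = 1 := by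
  rw [← mul_assoc, half_one_add_neg_mul_swap_mul hK hJ, Amat, Matrix.mul_nonsing_inv _ h]

lemma Amat_swap (hK : K * K = -1) (hJ : J * J = -1)
    (h : IsUnit ((1/2 : ℝ) • (1 + (-K) * J)).det) : Amat n J K = (-K) * J * Amat n K J :=
  Matrix.inv_eq_right_inv (half_one_add_neg_mul_swap_mul_Amat hK hJ h)

lemma Amat_swap_mul_eq_mul_Amat_swap (hK : K * K = -1) (hJ : J * J = -1)
    (h : IsUnit ((1/2 : ℝ) • (1 + (-K) * J)).det) : Amat n J K * J = K * Amat n J K :=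
  Amat_mul_eq_mul_Amat hJ hK
    (Matrix.isUnit_det_of_right_inverse (half_one_add_neg_mul_swap_mul_Amat hK hJ h))

end Amat

lemma mc_mul_P10 {n : ℕ} {J : Matrix (Fin (2*n)) (Fin (2*n)) ℝ} (hJ : J * J = -1) :
    mc J * P10 J = Complex.I • P10 J := by
  have hJJ : mc J * mc J = -1 := by rw [← mc_mul, hJ, mc_neg, mc_one]
  simp only [P10, Matrix.mul_smul, mul_sub, mul_one, hJJ, smul_sub, smul_smul]
  match_scalars <;> grind [Complex.I_mul_I]

section Pi0T

variable {n : ℕ} {J : Matrix (Fin (2*n)) (Fin (2*n)) ℝ}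

lemma J0_mul_Pi0T (hJ : J * J = -1) (h : IsUnit ((1/2 : ℝ) • (1 + (-J0 n) * J)).det) :
    mc (J0 n) * Pi0T n J = Complex.I • Pi0T n J := by
  rw [Pi0T, ← mul_assoc, ← mc_mul, ← Amat_swap_mul_eq_mul_Amat_swap (J0_mul_self n) hJ h, mc_mul,
    mul_assoc, mc_mul_P10 hJ, Matrix.mul_smul]

lemma Amat_mul_eq_two_smul_Pi0T (hJ : J * J = -1)
    (h : IsUnit ((1/2 : ℝ) • (1 + (-J0 n) * J)).det) :
    mc (Amat n (J0 n) J) * (mc (-J0 n * J) - Complex.I • mc (J0 n)) = (2 : ℂ) • Pi0T n J := by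
  have hBJ : mc (-J0 n * J) * mc J = mc (J0 n) := by
    rw [← mc_mul, mul_assoc, hJ, mul_neg_one, neg_neg]
  rw [Pi0T, P10, Amat_swap (J0_mul_self n) hJ h, ← Amat_mul_comm h, mc_mul _ (-J0 n * J), ← hBJ]
  simp only [mul_sub, Matrix.mul_smul, mul_one, mul_assoc, smul_sub, smul_smul]
  match_scalars <;> ring

lemma one_add_mul_Pi0T (hJ : J * J = -1) (h : IsUnit ((1/2 : ℝ) • (1 + (-J0 n) * J)).det) :
    (1 + mc (-J0 n * J)) * Pi0T n J = mc (-J0 n * J) - Complex.I • mc (J0 n) := by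
  have h2 : (1 + mc (-J0 n * J)) * mc (Amat n (J0 n) J) = (2 : ℂ) • 1 := by
    rw [← mc_one, ← mc_add, ← mc_mul, one_add_neg_mul_mul_Amat h, mc_smul, mc_one]
    norm_num
  apply smul_right_injective _ (two_ne_zero : (2 : ℂ) ≠ 0)
  dsimp only
  rw [← Matrix.mul_smul, ← Amat_mul_eq_two_smul_Pi0T hJ h, ← mul_assoc, h2, Matrix.smul_mul,
    one_mul]

lemma Compatible.exponent_eq_neg_pi_Pi0T (hJ : Compatible n J) (Y : Fin (2*n) → ℝ) :
    -(Real.pi : ℂ) / 2 * (((-J0 n * J) *ᵥ Y) ⬝ᵥ Y : ℝ)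
      + (mc (Amat n (J0 n) J) *ᵥ (Real.pi : ℂ) • ((mc (-J0 n * J) - Complex.I • mc (J0 n)) *ᵥ vc Y))
        ⬝ᵥ (Real.pi : ℂ) • ((mc (-J0 n * J) - Complex.I • mc (J0 n)) *ᵥ vc Y) / (4 * Real.pi)
    = -Real.pi * ((Pi0T n J *ᵥ vc Y) ⬝ᵥ vc Y) := by
  have h := hJ.isUnit_det_half_one_add_neg_J0_mul
  set X := mc (-J0 n * J) - Complex.I • mc (J0 n) with hX
  set P := Pi0T n J with hP
  -- `J₀P = iP` and `(1 + B)P = X` give `XᵀP = (B + iJ₀)P = X - 2P`.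
  have hXT : Xᵀ * P = X - (2 : ℂ) • P := by
    rw [Matrix.transpose_sub, Matrix.transpose_smul, ← mc_transpose, ← mc_transpose,
      hJ.transpose_neg_J0_mul, J0_transpose, mc_neg, smul_neg, sub_neg_eq_add, add_mul,
      smul_mul_assoc, J0_mul_Pi0T hJ.1 h, smul_smul, Complex.I_mul_I, ← hP, hX,
      ← one_add_mul_Pi0T hJ.1 h, add_mul, one_mul]
    module
  have hskew : (mc (J0 n) *ᵥ vc Y) ⬝ᵥ vc Y = 0 := by
    rw [← vc_mulVec, ← ofReal_dotProduct]
    exact_mod_cast Omega_self n Y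
  have hPX : (P *ᵥ vc Y) ⬝ᵥ (X *ᵥ vc Y)
      = (mc (-J0 n * J) *ᵥ vc Y) ⬝ᵥ vc Y - 2 * (P *ᵥ vc Y) ⬝ᵥ vc Y := by
    rw [dotProduct_comm, mulVec_dotProduct, Matrix.mulVec_mulVec, hXT, dotProduct_comm]
    simp only [X, Matrix.sub_mulVec, Matrix.smul_mulVec, sub_dotProduct, smul_dotProduct, hskew,
      smul_eq_mul, mul_zero, sub_zero]
  rw [Matrix.mulVec_smul, Matrix.mulVec_mulVec, Amat_mul_eq_two_smul_Pi0T hJ.1 h,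
    smul_dotProduct, dotProduct_smul, Matrix.smul_mulVec, smul_dotProduct, hPX,
    ofReal_dotProduct, vc_mulVec]
  have hπ : (Real.pi : ℂ) ≠ 0 := Complex.ofReal_ne_zero.mpr Real.pi_ne_zero
  simp only [smul_eq_mul]
  field_simp
  ring

end Pi0T

lemma Pker_mul_Pker_J0_zero {n : ℕ} {J : Matrix (Fin (2*n)) (Fin (2*n)) ℝ}
    (hB : (-J0 n * J)ᵀ = -J0 n * J) (Y W : Fin (2*n) → ℝ) :
    Pker n J Y W * Pker n (J0 n) W 0
      = Complex.exp (-(Real.pi : ℂ) / 2 * (((-J0 n * J) *ᵥ Y) ⬝ᵥ Y : ℝ)) *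
        Complex.exp (-(Real.pi : ℂ) * ((((1/2 : ℝ) • (1 + (-J0 n) * J)) *ᵥ W) ⬝ᵥ W : ℝ)
          + (Real.pi : ℂ) • ((mc (-J0 n * J) - Complex.I • mc (J0 n)) *ᵥ vc Y) ⬝ᵥ vc W) := by
  have hquad : ((-J0 n * J) *ᵥ (Y - W)) ⬝ᵥ (Y - W)
      = ((-J0 n * J) *ᵥ Y) ⬝ᵥ Y - 2 * ((-J0 n * J) *ᵥ Y) ⬝ᵥ W
        + ((-J0 n * J) *ᵥ W) ⬝ᵥ W := by
    have hsymm : ((-J0 n * J) *ᵥ W) ⬝ᵥ Y = ((-J0 n * J) *ᵥ Y) ⬝ᵥ W := by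
      rw [mulVec_dotProduct, hB, dotProduct_comm]
    simp only [Matrix.mulVec_sub, sub_dotProduct, dotProduct_sub, hsymm]
    ring
  have hlin : (Real.pi : ℂ) • ((mc (-J0 n * J) - Complex.I • mc (J0 n)) *ᵥ vc Y) ⬝ᵥ vc W
      = Real.pi * ((((-J0 n * J) *ᵥ Y) ⬝ᵥ W : ℝ) - Complex.I * Omega n Y W) := by
    simp only [Omega, ofReal_dotProduct, vc_mulVec, Matrix.sub_mulVec, Matrix.smul_mulVec,
      sub_dotProduct, smul_dotProduct, smul_eq_mul]
  have hJ0 : -J0 n * J0 n = 1 := by rw [neg_mul, J0_mul_self, neg_neg]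
  rw [Pker, Pker, ← Complex.exp_add, ← Complex.exp_add, hlin, hJ0, hquad]
  simp only [sub_zero, Matrix.one_mulVec, Matrix.smul_mulVec, Matrix.add_mulVec, smul_dotProduct,
    add_dotProduct, smul_eq_mul, Omega, dotProduct_zero]
  push_cast
  congr 1
  ring

theorem Compatible.integral_Pker_mul_Pker_J0_zero {n : ℕ}
    {J : Matrix (Fin (2*n)) (Fin (2*n)) ℝ} (hJ : Compatible n J) (Y : Fin (2*n) → ℝ) :
    ∫ W : Fin (2*n) → ℝ, Pker n J Y W * Pker n (J0 n) W 0 = PtP0form n J Y 0 := by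
  have hdet : √(Amat n (J0 n) J).det = (√((1/2 : ℝ) • (1 + (-J0 n) * J)).det)⁻¹ := by
    rw [Amat, Matrix.det_nonsing_inv, Ring.inverse_eq_inv', Real.sqrt_inv]
  have hΩ : Omega n Y 0 = 0 := dotProduct_zero _
  simp_rw [Pker_mul_Pker_J0_zero hJ.transpose_neg_J0_mul Y]
  rw [integral_const_mul, integral_cexp_neg_pi_quadratic_add hJ.posDef_half_one_add_neg_J0_mul,
    PtP0form, hdet, Complex.ofReal_inv, mul_left_comm, ← Complex.exp_add,
    show ((1/2 : ℝ) • (1 + (-J0 n) * J))⁻¹ = Amat n (J0 n) J from rfl,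
    hJ.exponent_eq_neg_pi_Pi0T Y, vc_zero, sub_zero, hΩ, Complex.ofReal_zero, mul_zero, add_zero]

lemma Pker_add_add (n : ℕ) (J : Matrix (Fin (2*n)) (Fin (2*n)) ℝ) (Z W a : Fin (2*n) → ℝ) :
    Pker n J (Z + a) (W + a)
      = Pker n J Z W * Complex.exp (-(Real.pi : ℂ) * Complex.I * Omega n (Z - W) a) := by
  rw [Pker, Pker, add_sub_add_right_eq_sub, Omega_add_add, ← Complex.exp_add]
  push_cast
  ring_nf

lemma PtP0form_add_right (n : ℕ) (J : Matrix (Fin (2*n)) (Fin (2*n)) ℝ) (Z a : Fin (2*n) → ℝ) :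
    PtP0form n J (Z + a) a
      = Complex.exp (-(Real.pi : ℂ) * Complex.I * Omega n Z a) * PtP0form n J Z 0 := by
  have hvc : vc (Z + a) - vc a = vc Z - vc 0 := by
    funext i; simp [vc]
  have hΩ : Omega n (Z + a) a = Omega n Z 0 + Omega n Z a := by
    simpa using Omega_add_add n Z 0 a
  rw [PtP0form, PtP0form, hvc, hΩ, mul_left_comm, ← Complex.exp_add]
  push_cast
  ring_nf

theorem integral_Pker_mul_Pker_add_right (n : ℕ) (J J' : Matrix (Fin (2*n)) (Fin (2*n)) ℝ)
    (Z a : Fin (2*n) → ℝ) :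
    ∫ W : Fin (2*n) → ℝ, Pker n J (Z + a) W * Pker n J' W a
      = Complex.exp (-(Real.pi : ℂ) * Complex.I * Omega n Z a)
        * ∫ W : Fin (2*n) → ℝ, Pker n J Z W * Pker n J' W 0 := by
  rw [← integral_add_right_eq_self _ a, ← integral_const_mul]
  congr 1 with W
  have hJ' := Pker_add_add n J' W 0 a
  rw [zero_add, sub_zero] at hJ'
  rw [Pker_add_add, hJ', mul_mul_mul_comm, ← Complex.exp_add, Omega_sub_left, mul_comm]
  congr 2
  push_cast
  ring

/-- the composed kernel (𝒫_t𝒫_0)(Z,Z') equals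
det(A_t^0)^{1/2}·exp(-π[⟨Π_0^t(Z-Z'),Z-Z'⟩ + iΩ(Z,Z')]). -/
theorem stmt4 (n : ℕ) (Jt : Matrix (Fin (2*n)) (Fin (2*n)) ℝ) (hJ : Compatible n Jt) :
    ∀ Z Z' : Fin (2*n) → ℝ,
      ∫ W : Fin (2*n) → ℝ, Pker n Jt Z W * Pker n (J0 n) W Z' = PtP0form n Jt Z Z' := by
  intro Z Z'
  obtain ⟨Y, rfl⟩ : ∃ Y, Z = Y + Z' := ⟨Z - Z', (sub_add_cancel Z Z').symm⟩
  rw [integral_Pker_mul_Pker_add_right, hJ.integral_Pker_mul_Pker_J0_zero, PtP0form_add_right]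

end
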